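/- The number of Fishburn permutations of size n avoiding the classical pattern 213 is 2^{n-1} for all n ≥ 1. -/

import Mathlib

open Finset

/-- The list of values of a permutation of `Fin n` (0-based values). -/
def permList {n : ℕ} (π : Equiv.Perm (Fin n)) : List ℕ :=
  (List.finRange n).map fun i => (π i : ℕ)

/-- A sequence `w` of distinct integers contains the classical pattern `p`:
some subsequence of `w` is order-isomorphic to `p`. -/
def SeqContains (w p : List ℕ) : Prop :=
  ∃ f : Fin p.length → Fin w.length, StrictMono f ∧
    ∀ i j : Fin p.length, p.get i < p.get j ↔ w.get (f i) < w.get (f j)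

/-- A permutation avoids a classical pattern (given as the list of its values). -/
def AvoidsPat {n : ℕ} (π : Equiv.Perm (Fin n)) (p : List ℕ) : Prop :=
  ¬ SeqContains (permList π) p

/-- `π` is a Fishburn permutation: it avoids the bivincular pattern (231,{1},{1}),
i.e. there are no positions `i < k` with `π i = π k + 1` and `π i < π (i+1)`
(0-based values, so `π i = π k + 1` encodes `π(i) > 1` and `π(k) = π(i) - 1`). -/
def IsFishburn {n : ℕ} (π : Equiv.Perm (Fin n)) : Prop :=
  ∀ i k : ℕ, ∀ hi : i < n, ∀ hk : k < n, ∀ _hik : i < k,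
    (π ⟨i, hi⟩ : ℕ) = (π ⟨k, hk⟩ : ℕ) + 1 →
    ¬ ((π ⟨i, hi⟩ : ℕ) < (π ⟨i + 1, by omega⟩ : ℕ))

/-- A permutation is indecomposable if it is not the direct sum of two nonempty
permutations, i.e. no proper nonempty initial segment of positions maps onto the
corresponding initial segment of values. -/
def IsIndecomposable {n : ℕ} (π : Equiv.Perm (Fin n)) : Prop :=
  ¬ ∃ k : ℕ, 0 < k ∧ k < n ∧ ∀ i : Fin n, (i : ℕ) < k → (π i : ℕ) < k

section Aux

lemma permList_length {n : ℕ} (π : Equiv.Perm (Fin n)) : (permList π).length = n := by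
  simp [permList]

lemma permList_get {n : ℕ} (π : Equiv.Perm (Fin n)) (i : Fin (permList π).length) :
    (permList π).get i = (π ⟨i.val, by have := i.isLt; simpa [permList] using this⟩ : ℕ) := by
  show (permList π)[i.val]'i.isLt = _
  simp [permList, List.get_eq_getElem, List.getElem_map, List.getElem_finRange]

lemma contains213_iff {n : ℕ} (π : Equiv.Perm (Fin n)) :
    SeqContains (permList π) [2,1,3] ↔
      ∃ a b c : Fin n, a < b ∧ b < c ∧ (π b : ℕ) < π a ∧ (π a : ℕ) < π c := by
  have e := permList_length π
  constructor
  · rintro ⟨f, hf, hiff⟩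
    have h0 : (0:ℕ) < [2,1,3].length := by norm_num
    have h1 : (1:ℕ) < [2,1,3].length := by norm_num
    have h2 : (2:ℕ) < [2,1,3].length := by norm_num
    have g0 : [2,1,3].get ⟨0,h0⟩ = 2 := rfl
    have g1 : [2,1,3].get ⟨1,h1⟩ = 1 := rfl
    have g2 : [2,1,3].get ⟨2,h2⟩ = 3 := rfl
    have H10 := (hiff ⟨1,h1⟩ ⟨0,h0⟩).mp (by rw [g1, g0]; norm_num)
    have H02 := (hiff ⟨0,h0⟩ ⟨2,h2⟩).mp (by rw [g0, g2]; norm_num)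
    rw [permList_get, permList_get] at H10 H02
    have m01 : f ⟨0,h0⟩ < f ⟨1,h1⟩ := hf (Fin.mk_lt_mk.mpr one_pos)
    have m12 : f ⟨1,h1⟩ < f ⟨2,h2⟩ := hf (Fin.mk_lt_mk.mpr one_lt_two)
    have lt0 : ((f ⟨0,h0⟩ : Fin (permList π).length) : ℕ) < n := by omega
    have lt1 : ((f ⟨1,h1⟩ : Fin (permList π).length) : ℕ) < n := by omega
    have lt2 : ((f ⟨2,h2⟩ : Fin (permList π).length) : ℕ) < n := by omega
    exact ⟨⟨_, lt0⟩, ⟨_, lt1⟩, ⟨_, lt2⟩,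
      Fin.mk_lt_mk.mpr m01, Fin.mk_lt_mk.mpr m12, H10, H02⟩
  · rintro ⟨a, b, c, hab, hbc, h1, h2⟩
    have hab' : (a:ℕ) < b := hab
    have hbc' : (b:ℕ) < c := hbc
    refine ⟨fun i => Fin.cast e.symm (if (i:ℕ) = 0 then a else if (i:ℕ) = 1 then b else c),
      ?_, ?_⟩
    · intro i j hij
      have hij' : (i:ℕ) < j := hij
      have hi := i.isLt; have hj := j.isLt
      simp only [List.length_cons, List.length_nil] at hi hj
      simp only [Fin.lt_def, Fin.coe_cast]
      split_ifs <;> omega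
    · intro i j
      rw [permList_get, permList_get]
      have hi := i.isLt; have hj := j.isLt
      simp only [List.length_cons, List.length_nil] at hi hj
      obtain ⟨iv, hiv⟩ := i; obtain ⟨jv, hjv⟩ := j
      simp only at hi hj
      have key : ∀ (x : Fin n) (h : (x:ℕ) < n), (π ⟨(x:ℕ), h⟩ : ℕ) = π x := by
        intro x h; congr
      interval_cases iv <;> interval_cases jv <;>
        simp only [Fin.coe_cast, if_true, if_false, Fin.isValue] <;>
        (try norm_num [List.get, key]) <;> try omega

/-- index-free reformulation of Fishburn, forward direction. -/
lemma fishAlt {n : ℕ} {π : Equiv.Perm (Fin n)} (hF : IsFishburn π) :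
    ∀ i k j : Fin n, (i:ℕ) < k → (j:ℕ) = (i:ℕ) + 1 →
      (π i : ℕ) = π k + 1 → ¬ ((π i : ℕ) < π j) := by
  intro i k j hik hj heq hlt
  have hi1 : (i:ℕ) + 1 < n := by have := j.isLt; omega
  apply hF i k i.isLt k.isLt hik heq
  have hj' : π j = π ⟨(i:ℕ)+1, hi1⟩ := congrArg π (Fin.ext (by simpa using hj))
  exact hj' ▸ hlt

variable {m : ℕ}

def addMin (σ : Equiv.Perm (Fin m)) : Equiv.Perm (Fin (m+1)) :=
  ((finSuccEquiv m).symm.permCongr) σ.optionCongr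

def addMax (σ : Equiv.Perm (Fin m)) : Equiv.Perm (Fin (m+1)) :=
  (finSuccEquiv m).trans (σ.optionCongr.trans finSuccEquivLast.symm)

lemma addMin_zero (σ : Equiv.Perm (Fin m)) : addMin σ 0 = 0 := by
  simp [addMin, Equiv.permCongr_apply]

lemma addMin_succ (σ : Equiv.Perm (Fin m)) (j : Fin m) : addMin σ j.succ = (σ j).succ := by
  simp [addMin, Equiv.permCongr_apply]

lemma addMax_zero (σ : Equiv.Perm (Fin m)) : addMax σ 0 = Fin.last m := by
  simp [addMax]

lemma addMax_succ (σ : Equiv.Perm (Fin m)) (j : Fin m) : addMax σ j.succ = (σ j).castSucc := by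
  simp [addMax]

lemma addMin_mk_zero (σ : Equiv.Perm (Fin m)) (h : 0 < m+1) :
    ((addMin σ) ⟨0,h⟩ : ℕ) = 0 := by
  have h0 : (⟨0,h⟩ : Fin (m+1)) = 0 := Fin.ext (by simp)
  rw [h0, addMin_zero]; simp

lemma addMin_mk_succ (σ : Equiv.Perm (Fin m)) {i : ℕ} (h : i+1 < m+1) :
    ((addMin σ) ⟨i+1,h⟩ : ℕ) = (σ ⟨i, Nat.succ_lt_succ_iff.mp h⟩ : ℕ) + 1 := by
  have h0 : (⟨i+1,h⟩ : Fin (m+1)) = Fin.succ ⟨i, Nat.succ_lt_succ_iff.mp h⟩ := rfl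
  rw [h0, addMin_succ, Fin.val_succ]

lemma addMax_mk_zero (σ : Equiv.Perm (Fin m)) (h : 0 < m+1) :
    ((addMax σ) ⟨0,h⟩ : ℕ) = m := by
  have h0 : (⟨0,h⟩ : Fin (m+1)) = 0 := Fin.ext (by simp)
  rw [h0, addMax_zero]; simp

lemma addMax_mk_succ (σ : Equiv.Perm (Fin m)) {i : ℕ} (h : i+1 < m+1) :
    ((addMax σ) ⟨i+1,h⟩ : ℕ) = (σ ⟨i, Nat.succ_lt_succ_iff.mp h⟩ : ℕ) := by
  have h0 : (⟨i+1,h⟩ : Fin (m+1)) = Fin.succ ⟨i, Nat.succ_lt_succ_iff.mp h⟩ := rfl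
  rw [h0, addMax_succ, Fin.coe_castSucc]

end Aux

section Transfer
variable {m : ℕ}

lemma fish_addMin {σ : Equiv.Perm (Fin m)} (hσ : IsFishburn σ) : IsFishburn (addMin σ) := by
  intro i k hi hk hik heq hlt
  rcases i with _ | i'
  · rw [addMin_mk_zero] at heq; omega
  · obtain ⟨k', rfl⟩ : ∃ k', k = k'+1 := ⟨k-1, by omega⟩
    rw [addMin_mk_succ, addMin_mk_succ] at heq
    rw [addMin_mk_succ, addMin_mk_succ] at hlt
    exact fishAlt hσ ⟨i', Nat.succ_lt_succ_iff.mp hi⟩ ⟨k', Nat.succ_lt_succ_iff.mp hk⟩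
      ⟨i'+1, by omega⟩ (by simpa using Nat.lt_of_succ_lt_succ hik) rfl
      (Nat.succ_injective heq) (Nat.lt_of_succ_lt_succ hlt)

lemma fish_addMax {σ : Equiv.Perm (Fin m)} (hσ : IsFishburn σ) : IsFishburn (addMax σ) := by
  intro i k hi hk hik heq hlt
  rcases i with _ | i'
  · obtain ⟨k', rfl⟩ : ∃ k', k = k'+1 := ⟨k-1, by omega⟩
    rw [addMax_mk_zero] at hlt
    rw [addMax_mk_succ] at hlt
    exact lt_irrefl m (hlt.trans (Fin.is_lt _))
  · obtain ⟨k', rfl⟩ : ∃ k', k = k'+1 := ⟨k-1, by omega⟩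
    rw [addMax_mk_succ, addMax_mk_succ] at heq
    rw [addMax_mk_succ, addMax_mk_succ] at hlt
    exact fishAlt hσ ⟨i', Nat.succ_lt_succ_iff.mp hi⟩ ⟨k', Nat.succ_lt_succ_iff.mp hk⟩
      ⟨i'+1, by omega⟩ (by simpa using Nat.lt_of_succ_lt_succ hik) rfl heq hlt

lemma fish_of_addMin {σ : Equiv.Perm (Fin m)} (hσ : IsFishburn (addMin σ)) : IsFishburn σ := by
  intro i k hi hk hik heq hlt
  refine fishAlt hσ (Fin.succ ⟨i,hi⟩) (Fin.succ ⟨k,hk⟩) (Fin.succ ⟨i+1, by omega⟩)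
    (by simp [Fin.val_succ]; omega) rfl ?_ ?_
  · rw [addMin_succ, addMin_succ, Fin.val_succ, Fin.val_succ]
    exact congrArg (· + 1) heq
  · rw [addMin_succ, addMin_succ, Fin.val_succ, Fin.val_succ]
    exact Nat.succ_lt_succ hlt

lemma fish_of_addMax {σ : Equiv.Perm (Fin m)} (hσ : IsFishburn (addMax σ)) : IsFishburn σ := by
  intro i k hi hk hik heq hlt
  refine fishAlt hσ (Fin.succ ⟨i,hi⟩) (Fin.succ ⟨k,hk⟩) (Fin.succ ⟨i+1, by omega⟩)
    (by simp [Fin.val_succ]; omega) rfl ?_ ?_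
  · rw [addMax_succ, addMax_succ, Fin.coe_castSucc, Fin.coe_castSucc]
    exact heq
  · rw [addMax_succ, addMax_succ, Fin.coe_castSucc, Fin.coe_castSucc]
    exact hlt

lemma avoid_addMin {σ : Equiv.Perm (Fin m)} (hσ : AvoidsPat σ [2,1,3]) :
    AvoidsPat (addMin σ) [2,1,3] := by
  intro hc
  apply hσ
  rw [contains213_iff] at hc ⊢
  obtain ⟨a, b, c, hab, hbc, h1, h2⟩ := hc
  have ha : a ≠ 0 := by
    rintro rfl
    rw [addMin_zero] at h1
    simp at h1
  obtain ⟨a', rfl⟩ := Fin.eq_succ_of_ne_zero ha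
  have hb : b ≠ 0 := Fin.pos_iff_ne_zero.mp (lt_trans (Fin.succ_pos a') hab)
  obtain ⟨b', rfl⟩ := Fin.eq_succ_of_ne_zero hb
  have hcc : c ≠ 0 := Fin.pos_iff_ne_zero.mp (lt_trans (Fin.succ_pos b') hbc)
  obtain ⟨c', rfl⟩ := Fin.eq_succ_of_ne_zero hcc
  simp only [addMin_succ, Fin.val_succ] at h1 h2
  exact ⟨a', b', c', Fin.succ_lt_succ_iff.mp hab, Fin.succ_lt_succ_iff.mp hbc,
    by omega, by omega⟩

lemma avoid_addMax {σ : Equiv.Perm (Fin m)} (hσ : AvoidsPat σ [2,1,3]) :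
    AvoidsPat (addMax σ) [2,1,3] := by
  intro hc
  apply hσ
  rw [contains213_iff] at hc ⊢
  obtain ⟨a, b, c, hab, hbc, h1, h2⟩ := hc
  have ha : a ≠ 0 := by
    rintro rfl
    rw [addMax_zero] at h2
    have := c.isLt
    rw [Fin.val_last] at h2
    have := (addMax σ c).isLt
    omega
  obtain ⟨a', rfl⟩ := Fin.eq_succ_of_ne_zero ha
  have hb : b ≠ 0 := Fin.pos_iff_ne_zero.mp (lt_trans (Fin.succ_pos a') hab)
  obtain ⟨b', rfl⟩ := Fin.eq_succ_of_ne_zero hb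
  have hcc : c ≠ 0 := Fin.pos_iff_ne_zero.mp (lt_trans (Fin.succ_pos b') hbc)
  obtain ⟨c', rfl⟩ := Fin.eq_succ_of_ne_zero hcc
  simp only [addMax_succ, Fin.coe_castSucc] at h1 h2
  exact ⟨a', b', c', Fin.succ_lt_succ_iff.mp hab, Fin.succ_lt_succ_iff.mp hbc, h1, h2⟩

lemma avoid_of_addMin {σ : Equiv.Perm (Fin m)} (hσ : AvoidsPat (addMin σ) [2,1,3]) :
    AvoidsPat σ [2,1,3] := by
  intro hc
  apply hσ
  rw [contains213_iff] at hc ⊢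
  obtain ⟨a, b, c, hab, hbc, h1, h2⟩ := hc
  refine ⟨a.succ, b.succ, c.succ, Fin.succ_lt_succ_iff.mpr hab, Fin.succ_lt_succ_iff.mpr hbc,
    ?_, ?_⟩ <;>
  · rw [addMin_succ, addMin_succ, Fin.val_succ, Fin.val_succ]; omega

lemma avoid_of_addMax {σ : Equiv.Perm (Fin m)} (hσ : AvoidsPat (addMax σ) [2,1,3]) :
    AvoidsPat σ [2,1,3] := by
  intro hc
  apply hσ
  rw [contains213_iff] at hc ⊢
  obtain ⟨a, b, c, hab, hbc, h1, h2⟩ := hc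
  refine ⟨a.succ, b.succ, c.succ, Fin.succ_lt_succ_iff.mpr hab, Fin.succ_lt_succ_iff.mpr hbc,
    ?_, ?_⟩ <;>
  · rw [addMax_succ, addMax_succ, Fin.coe_castSucc, Fin.coe_castSucc]; omega

lemma exists_addMin (π : Equiv.Perm (Fin (m+1))) (h0 : π 0 = 0) :
    ∃ σ : Equiv.Perm (Fin m), addMin σ = π := by
  have hne : ∀ j : Fin m, π j.succ ≠ 0 := fun j h =>
    Fin.succ_ne_zero j (π.injective (h.trans h0.symm))
  have hne' : ∀ j : Fin m, π.symm j.succ ≠ 0 := by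
    intro j h
    apply Fin.succ_ne_zero j
    have := congrArg π h
    rw [Equiv.apply_symm_apply, h0] at this
    exact this
  refine ⟨⟨fun j => (π j.succ).pred (hne j), fun j => (π.symm j.succ).pred (hne' j),
    ?_, ?_⟩, ?_⟩
  · intro j
    simp [Fin.succ_pred, Equiv.symm_apply_apply, Fin.pred_succ]
  · intro j
    simp [Fin.succ_pred, Equiv.apply_symm_apply, Fin.pred_succ]
  · apply Equiv.ext
    intro x
    induction x using Fin.cases with
    | zero => rw [addMin_zero, h0]
    | succ j =>
      rw [addMin_succ]
      exact Fin.succ_pred (π j.succ) (hne j)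

lemma exists_addMax (π : Equiv.Perm (Fin (m+1))) (h0 : π 0 = Fin.last m) :
    ∃ σ : Equiv.Perm (Fin m), addMax σ = π := by
  have hne : ∀ j : Fin m, π j.succ ≠ Fin.last m := fun j h =>
    Fin.succ_ne_zero j (π.injective (h.trans h0.symm))
  have hne' : ∀ j : Fin m, π.symm j.castSucc ≠ 0 := by
    intro j h
    have := congrArg π h
    rw [Equiv.apply_symm_apply, h0] at this
    exact absurd this (Fin.ne_of_lt (Fin.castSucc_lt_last j))
  refine ⟨⟨fun j => (π j.succ).castPred (hne j), fun j => (π.symm j.castSucc).pred (hne' j),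
    ?_, ?_⟩, ?_⟩
  · intro j
    simp [Fin.castSucc_castPred, Equiv.symm_apply_apply, Fin.pred_succ]
  · intro j
    simp [Fin.succ_pred, Equiv.apply_symm_apply, Fin.castPred_castSucc]
  · apply Equiv.ext
    intro x
    induction x using Fin.cases with
    | zero => rw [addMax_zero, h0]
    | succ j =>
      rw [addMax_succ]
      exact Fin.castSucc_castPred (π j.succ) (hne j)

lemma first_elem (π : Equiv.Perm (Fin (m+2))) (hF : IsFishburn π)
    (hA : AvoidsPat π [2,1,3]) : π 0 = 0 ∨ π 0 = Fin.last (m+1) := by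
  by_contra hcon
  push_neg at hcon
  obtain ⟨h1, h2⟩ := hcon
  have hv1 : 0 < (π 0 : ℕ) := Nat.pos_of_ne_zero (fun h => h1 (Fin.ext (by simp [h])))
  have hv2 : (π 0 : ℕ) < m+1 :=
    lt_of_le_of_ne (Nat.lt_succ_iff.mp (π 0).isLt)
      (fun h => h2 (Fin.ext (by simp [h, Fin.val_last])))
  set k := π.symm ⟨(π 0 : ℕ) - 1, by omega⟩ with hkdef
  have hπk : π k = ⟨(π 0 : ℕ) - 1, by omega⟩ := π.apply_symm_apply _
  have hk0 : k ≠ 0 := by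
    intro h
    rw [h] at hπk
    have : (π 0 : ℕ) = (π 0 : ℕ) - 1 := congrArg Fin.val hπk
    omega
  have hone : (1:ℕ) < m+2 := by omega
  have hstep := fishAlt hF 0 k ⟨1, hone⟩
    (Fin.lt_def.mp (Fin.pos_iff_ne_zero.mpr hk0)) (by simp)
    (by rw [hπk]; simp; omega)
  have hne1 : (π ⟨1, hone⟩ : ℕ) ≠ (π 0 : ℕ) := by
    intro h
    have : (⟨1, hone⟩ : Fin (m+2)) = 0 := π.injective (Fin.ext h)
    simpa using congrArg Fin.val this
  have hlt1 : (π ⟨1, hone⟩ : ℕ) < π 0 := by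
    rcases lt_or_gt_of_ne hne1 with h | h
    · exact h
    · exact absurd h hstep
  set c := π.symm (Fin.last (m+1)) with hcdef
  have hπc : π c = Fin.last (m+1) := π.apply_symm_apply _
  have hc0 : (c : ℕ) ≠ 0 := by
    intro h
    have : c = 0 := Fin.ext h
    rw [this] at hπc
    exact h2 hπc
  have hc1 : (c : ℕ) ≠ 1 := by
    intro h
    have : c = ⟨1, hone⟩ := Fin.ext h
    rw [this] at hπc
    have := congrArg Fin.val hπc
    rw [Fin.val_last] at this
    omega
  apply hA
  rw [contains213_iff]
  refine ⟨0, ⟨1, hone⟩, c, ?_, ?_, hlt1, ?_⟩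
  · simp [Fin.lt_def]
  · simp [Fin.lt_def]; omega
  · rw [hπc, Fin.val_last]; exact hv2

end Transfer

theorem stmt3 (n : ℕ) (hn : 1 ≤ n) :
    Nat.card {π : Equiv.Perm (Fin n) // IsFishburn π ∧ AvoidsPat π [2, 1, 3]} =
      2 ^ (n - 1) := by
  obtain ⟨m, rfl⟩ : ∃ m, n = m + 1 := ⟨n - 1, by omega⟩
  clear hn
  induction m with
  | zero =>
    have hu : ∀ π : Equiv.Perm (Fin 1), IsFishburn π ∧ AvoidsPat π [2,1,3] := by
      intro π
      constructor
      · intro i k hi hk hik heq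
        omega
      · intro hc
        rw [contains213_iff] at hc
        obtain ⟨a, b, c, hab, hbc, _, _⟩ := hc
        have := a.isLt; have := b.isLt; have := c.isLt
        have := Fin.lt_def.mp hab; have := Fin.lt_def.mp hbc
        omega
    haveI : Subsingleton (Equiv.Perm (Fin 1)) :=
      ⟨fun a b => Equiv.ext fun x => Subsingleton.elim _ _⟩
    have h1 : Nat.card {π : Equiv.Perm (Fin (0+1)) // IsFishburn π ∧ AvoidsPat π [2,1,3]} = 1 :=
      Nat.card_eq_one_iff_unique.mpr
        ⟨⟨fun a b => Subtype.ext (Subsingleton.elim _ _)⟩, ⟨⟨1, hu 1⟩⟩⟩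
    simpa using h1
  | succ k ih =>
    set T := {σ : Equiv.Perm (Fin (k+1)) // IsFishburn σ ∧ AvoidsPat σ [2,1,3]} with hT
    set T' := {π : Equiv.Perm (Fin (k+1+1)) // IsFishburn π ∧ AvoidsPat π [2,1,3]} with hT'
    let Φ : Bool × T → T' := fun x =>
      match x with
      | (false, ⟨σ, hσ⟩) => ⟨addMin σ, fish_addMin hσ.1, avoid_addMin hσ.2⟩
      | (true, ⟨σ, hσ⟩) => ⟨addMax σ, fish_addMax hσ.1, avoid_addMax hσ.2⟩
    have hbij : Function.Bijective Φ := by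
      constructor
      · rintro ⟨b1, σ1, hσ1⟩ ⟨b2, σ2, hσ2⟩ heq
        have hval : (Φ (b1, ⟨σ1, hσ1⟩)).val = (Φ (b2, ⟨σ2, hσ2⟩)).val := congrArg Subtype.val heq
        match b1, b2 with
        | false, false =>
          simp only [Φ] at hval
          have : σ1 = σ2 := by
            apply Equiv.ext
            intro j
            have : addMin σ1 j.succ = addMin σ2 j.succ := by rw [hval]
            rw [addMin_succ, addMin_succ] at this
            exact Fin.succ_injective _ this
          simp [Prod.ext_iff, Subtype.ext_iff, this]
        | true, true =>
          simp only [Φ] at hval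
          have : σ1 = σ2 := by
            apply Equiv.ext
            intro j
            have : addMax σ1 j.succ = addMax σ2 j.succ := by rw [hval]
            rw [addMax_succ, addMax_succ] at this
            exact Fin.castSucc_injective _ this
          simp [Prod.ext_iff, Subtype.ext_iff, this]
        | false, true =>
          simp only [Φ] at hval
          have hz : (0 : Fin (k+1+1)) = Fin.last (k+1) := by
            rw [← addMin_zero σ1, hval, addMax_zero]
          have := congrArg Fin.val hz
          simp [Fin.val_last] at this
        | true, false =>
          simp only [Φ] at hval
          have hz : (0 : Fin (k+1+1)) = Fin.last (k+1) := by
            rw [← addMin_zero σ2, ← hval, addMax_zero]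
          have := congrArg Fin.val hz
          simp [Fin.val_last] at this
      · rintro ⟨π, hF, hA⟩
        rcases first_elem π hF hA with h0 | h0
        · obtain ⟨σ, rfl⟩ := exists_addMin π h0
          exact ⟨(false, ⟨σ, fish_of_addMin hF, avoid_of_addMin hA⟩), rfl⟩
        · obtain ⟨σ, rfl⟩ := exists_addMax π h0
          exact ⟨(true, ⟨σ, fish_of_addMax hF, avoid_of_addMax hA⟩), rfl⟩
    have hcard : Nat.card T' = Nat.card (Bool × T) := (Nat.card_eq_of_bijective Φ hbij).symm
    rw [hcard, Nat.card_prod]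
    have hB : Nat.card Bool = 2 := by simp [Nat.card_eq_fintype_card]
    have ih' : Nat.card T = 2 ^ k := by simpa using ih
    rw [hB, ih']
    have hkk : k + 1 + 1 - 1 = k + 1 := rfl
    rw [hkk, pow_succ]
    ring
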